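/- The function ϱ((γ₁, t₁), (γ₂, t₂)) = d_sup(γ̂₁, γ̂₂) + |t₁ − t₂|, where γ̂ᵢ extends γᵢ by its initial value to all of ℝ and d_sup(f, g) = Σ_{k=1}^{∞} 2^{−k} sup_{t ∈ [−k,k]} min(‖f(t) − g(t)‖, 1), defines a metric on the space Π of pairs (γ, t₀) with γ : [t₀, ∞) → ℝ^d continuous, and (Π, ϱ) is a complete metric space. -/

import Mathlib

/-!
For each `k` the capped sup distance `sup_{[-k,k]} min(‖f - g‖, 1)` is a pseudometric bounded
by `1`, so with the summable weights `2^{-k}` the series `d_sup` is a pseudometric; it separates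
points because every time lies in some window. Since the `k`-th term of the series is bounded by
`d_sup`, a `ϱ`-Cauchy sequence has convergent starting times `tₙ → T` and paths that are
uniformly Cauchy on every window, hence converge locally uniformly to a continuous `g`. The
limit is constant before `T` because `γ̂ₙ(min(t, tₙ)) = γ̂ₙ(tₙ)`, and `d_sup(γ̂ₙ, g) → 0` by
dominated convergence for the series.
-/

open Filter

/-- A continuous path in `ℝ^d` with a starting time, represented by its
extension `γ̂ : ℝ → ℝ^d` which is constant before the starting time. -/
structure PathWithStart (d : ℕ) where
  t0 : ℝ
  γ : ℝ → EuclideanSpace ℝ (Fin d)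
  cont : Continuous γ
  const_before : ∀ t ≤ t0, γ t = γ t0

/-- The local-uniform distance
`d_sup(f,g) = Σ_k 2^{-k} sup_{t ∈ [-k,k]} min(‖f(t) − g(t)‖, 1)`. -/
noncomputable def dsup {d : ℕ} (f g : ℝ → EuclideanSpace ℝ (Fin d)) : ℝ :=
  ∑' k : ℕ, (1 / 2 : ℝ) ^ (k + 1) *
    sSup ((fun t => min (dist (f t) (g t)) 1) '' Set.Icc (-(k + 1 : ℝ)) (k + 1 : ℝ))

/-- `ϱ((γ₁,t₁),(γ₂,t₂)) = d_sup(γ̂₁, γ̂₂) + |t₁ − t₂|`. -/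
noncomputable def pathDist {d : ℕ} (p q : PathWithStart d) : ℝ :=
  dsup p.γ q.γ + |p.t0 - q.t0|

open Topology Set

/-- The paper's window `[-k, k]`, with the summation index shifted to start at `0`. -/
def window (k : ℕ) : Set ℝ := Icc (-(k + 1 : ℝ)) (k + 1)

lemma window_nonempty (k : ℕ) : (window k).Nonempty :=
  nonempty_Icc.2 (by linarith [(k.cast_nonneg : (0 : ℝ) ≤ k)])

lemma exists_subset_window {s : Set ℝ} (hs : Bornology.IsBounded s) : ∃ k : ℕ, s ⊆ window k := by
  obtain ⟨r, hr⟩ := (Metric.isBounded_iff_subset_closedBall 0).1 hs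
  refine ⟨⌈r⌉₊, hr.trans ?_⟩
  rw [Real.closedBall_eq_Icc, window]
  have := Nat.le_ceil r
  exact Icc_subset_Icc (by linarith) (by linarith)

lemma exists_mem_window (t : ℝ) : ∃ k : ℕ, t ∈ window k := by
  simpa using exists_subset_window (Bornology.isBounded_singleton (x := t))

lemma min_one_le_add_min_one {x a b : ℝ} (hx : x ≤ a + b) (ha : 0 ≤ a) (hb : 0 ≤ b) :
    min x 1 ≤ min a 1 + min b 1 := by
  simp only [min_def]
  split_ifs <;> linarith

section CappedSupDist

variable {E : Type*} [PseudoMetricSpace E] {k : ℕ} {f g h : ℝ → E}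

noncomputable def cappedSupDist (k : ℕ) (f g : ℝ → E) : ℝ :=
  sSup ((fun t => min (dist (f t) (g t)) 1) '' window k)

lemma bddAbove_cappedSupDist_image (k : ℕ) (f g : ℝ → E) :
    BddAbove ((fun t => min (dist (f t) (g t)) 1) '' window k) :=
  ⟨1, forall_mem_image.2 fun _ _ => min_le_right _ _⟩

lemma min_dist_le_cappedSupDist {t : ℝ} (ht : t ∈ window k) :
    min (dist (f t) (g t)) 1 ≤ cappedSupDist k f g :=
  le_csSup (bddAbove_cappedSupDist_image k f g) (mem_image_of_mem _ ht)

lemma cappedSupDist_le_iff {δ : ℝ} :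
    cappedSupDist k f g ≤ δ ↔ ∀ t ∈ window k, min (dist (f t) (g t)) 1 ≤ δ := by
  rw [cappedSupDist, csSup_le_iff (bddAbove_cappedSupDist_image k f g)
    ((window_nonempty k).image _), forall_mem_image]

lemma cappedSupDist_le_of_dist_le {δ : ℝ} (h : ∀ t ∈ window k, dist (f t) (g t) ≤ δ) :
    cappedSupDist k f g ≤ δ :=
  cappedSupDist_le_iff.2 fun t ht => (min_le_left _ _).trans (h t ht)

lemma cappedSupDist_nonneg : 0 ≤ cappedSupDist k f g :=
  have ⟨_, ht⟩ := window_nonempty k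
  (le_min dist_nonneg zero_le_one).trans (min_dist_le_cappedSupDist ht)

lemma cappedSupDist_le_one : cappedSupDist k f g ≤ 1 :=
  cappedSupDist_le_iff.2 fun _ _ => min_le_right _ _

lemma cappedSupDist_comm : cappedSupDist k f g = cappedSupDist k g f := by
  simp only [cappedSupDist, dist_comm]

lemma cappedSupDist_self : cappedSupDist k f f = 0 :=
  le_antisymm (cappedSupDist_le_of_dist_le fun t _ => (dist_self (f t)).le) cappedSupDist_nonneg

lemma cappedSupDist_triangle : cappedSupDist k f h ≤ cappedSupDist k f g + cappedSupDist k g h :=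
  cappedSupDist_le_iff.2 fun _ ht =>
    (min_one_le_add_min_one (dist_triangle _ _ _) dist_nonneg dist_nonneg).trans
      (add_le_add (min_dist_le_cappedSupDist ht) (min_dist_le_cappedSupDist ht))

lemma dist_lt_of_cappedSupDist_lt {ε t : ℝ} (ht : t ∈ window k)
    (h : cappedSupDist k f g < min ε 1) : dist (f t) (g t) < ε := by
  by_contra! hε
  exact ((min_dist_le_cappedSupDist ht).trans_lt h).not_ge (min_le_min_right 1 hε)

end CappedSupDist

section Dsup

variable {d : ℕ} {f g : ℝ → EuclideanSpace ℝ (Fin d)}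

lemma dsup_eq_tsum (f g : ℝ → EuclideanSpace ℝ (Fin d)) :
    dsup f g = ∑' k : ℕ, (1 / 2 : ℝ) ^ (k + 1) * cappedSupDist k f g := rfl

lemma summable_half_pow_succ : Summable fun k : ℕ => (1 / 2 : ℝ) ^ (k + 1) :=
  (summable_nat_add_iff 1).2 summable_geometric_two

lemma half_pow_succ_mul_cappedSupDist_le (k : ℕ) (f g : ℝ → EuclideanSpace ℝ (Fin d)) :
    (1 / 2 : ℝ) ^ (k + 1) * cappedSupDist k f g ≤ (1 / 2 : ℝ) ^ (k + 1) :=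
  mul_le_of_le_one_right (by positivity) cappedSupDist_le_one

lemma summable_dsup_terms (f g : ℝ → EuclideanSpace ℝ (Fin d)) :
    Summable fun k : ℕ => (1 / 2 : ℝ) ^ (k + 1) * cappedSupDist k f g :=
  summable_half_pow_succ.of_nonneg_of_le (fun _ => mul_nonneg (by positivity) cappedSupDist_nonneg)
    (fun k => half_pow_succ_mul_cappedSupDist_le k f g)

lemma dsup_nonneg (f g : ℝ → EuclideanSpace ℝ (Fin d)) : 0 ≤ dsup f g :=
  tsum_nonneg fun _ => mul_nonneg (by positivity) cappedSupDist_nonneg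

lemma half_pow_succ_mul_cappedSupDist_le_dsup (k : ℕ) (f g : ℝ → EuclideanSpace ℝ (Fin d)) :
    (1 / 2 : ℝ) ^ (k + 1) * cappedSupDist k f g ≤ dsup f g :=
  (summable_dsup_terms f g).le_tsum k fun _ _ => mul_nonneg (by positivity) cappedSupDist_nonneg

lemma cappedSupDist_lt_of_dsup_lt {k : ℕ} {δ : ℝ} (h : dsup f g < (1 / 2 : ℝ) ^ (k + 1) * δ) :
    cappedSupDist k f g < δ :=
  lt_of_mul_lt_mul_left ((half_pow_succ_mul_cappedSupDist_le_dsup k f g).trans_lt h)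
    (by positivity)

lemma dsup_comm (f g : ℝ → EuclideanSpace ℝ (Fin d)) : dsup f g = dsup g f := by
  simp only [dsup_eq_tsum, cappedSupDist_comm]

lemma dsup_self (f : ℝ → EuclideanSpace ℝ (Fin d)) : dsup f f = 0 := by
  simp only [dsup_eq_tsum, cappedSupDist_self, mul_zero, tsum_zero]

lemma dsup_triangle (f g h : ℝ → EuclideanSpace ℝ (Fin d)) : dsup f h ≤ dsup f g + dsup g h := by
  simp only [dsup_eq_tsum]
  rw [← (summable_dsup_terms f g).tsum_add (summable_dsup_terms g h)]
  refine (summable_dsup_terms f h).tsum_le_tsum (fun k => ?_)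
    ((summable_dsup_terms f g).add (summable_dsup_terms g h))
  rw [← mul_add]
  exact mul_le_mul_of_nonneg_left cappedSupDist_triangle (by positivity)

lemma eq_of_dsup_eq_zero (h : dsup f g = 0) : f = g := by
  funext t
  obtain ⟨k, ht⟩ := exists_mem_window t
  have hk : cappedSupDist k f g ≤ 0 := by
    have := half_pow_succ_mul_cappedSupDist_le_dsup k f g
    rw [h] at this
    exact nonpos_of_mul_nonpos_right this (by positivity)
  have hmin := (min_dist_le_cappedSupDist ht).trans hk
  exact dist_le_zero.1 ((min_le_iff.1 hmin).resolve_right (by norm_num))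

lemma uniformCauchySeqOn_window_of_dsup {F : ℕ → ℝ → EuclideanSpace ℝ (Fin d)}
    (hF : ∀ ε : ℝ, 0 < ε → ∃ N : ℕ, ∀ m ≥ N, ∀ n ≥ N, dsup (F m) (F n) < ε) (k : ℕ) :
    UniformCauchySeqOn F atTop (window k) := by
  refine Metric.uniformCauchySeqOn_iff.2 fun ε hε => ?_
  obtain ⟨N, hN⟩ := hF ((1 / 2 : ℝ) ^ (k + 1) * min ε 1) (by positivity)
  exact ⟨N, fun m hm n hn t ht =>
    dist_lt_of_cappedSupDist_lt ht (cappedSupDist_lt_of_dsup_lt (hN m hm n hn))⟩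

lemma exists_tendstoLocallyUniformly_of_dsup_cauchy {F : ℕ → ℝ → EuclideanSpace ℝ (Fin d)}
    (hF : ∀ ε : ℝ, 0 < ε → ∃ N : ℕ, ∀ m ≥ N, ∀ n ≥ N, dsup (F m) (F n) < ε) :
    ∃ g, TendstoLocallyUniformly F g atTop := by
  have hU := uniformCauchySeqOn_window_of_dsup hF
  choose g hg using fun t =>
    cauchySeq_tendsto_of_complete ((hU _).cauchySeq (exists_mem_window t).choose_spec)
  refine ⟨g, tendstoLocallyUniformly_iff_forall_isCompact.2 fun C hC => ?_⟩
  obtain ⟨k, hk⟩ := exists_subset_window hC.isBounded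
  exact ((hU k).tendstoUniformlyOn_of_tendsto fun t _ => hg t).mono hk

lemma tendsto_dsup_of_tendstoLocallyUniformly {ι : Type*} {l : Filter ι}
    {F : ι → ℝ → EuclideanSpace ℝ (Fin d)} (hF : TendstoLocallyUniformly F g l) :
    Tendsto (fun n => dsup (F n) g) l (𝓝 0) := by
  have hterm (k : ℕ) : Tendsto (fun n => cappedSupDist k (F n) g) l (𝓝 0) := by
    have hk := Metric.tendstoUniformlyOn_iff.1
      (tendstoLocallyUniformly_iff_forall_isCompact.1 hF (window k) isCompact_Icc)
    refine tendsto_order.2 ⟨fun a ha => Eventually.of_forall fun n => ha.trans_le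
      cappedSupDist_nonneg, fun ε hε => (hk (ε / 2) (by positivity)).mono fun n hn => ?_⟩
    exact (cappedSupDist_le_of_dist_le fun t ht => (dist_comm (F n t) (g t) ▸ hn t ht).le)
      |>.trans_lt (half_lt_self hε)
  have := tendsto_tsum_of_dominated_convergence (g := fun _ => (0 : ℝ)) summable_half_pow_succ
    (fun k => by simpa only [mul_zero] using (hterm k).const_mul ((1 / 2 : ℝ) ^ (k + 1)))
    (Eventually.of_forall fun n k => by
      rw [Real.norm_of_nonneg (mul_nonneg (by positivity) cappedSupDist_nonneg)]
      exact half_pow_succ_mul_cappedSupDist_le k (F n) g)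
  rwa [tsum_zero] at this

end Dsup

namespace PathWithStart

variable {d : ℕ}

lemma ext {p q : PathWithStart d} (ht : p.t0 = q.t0) (hγ : p.γ = q.γ) : p = q := by
  cases p; cases q; congr

lemma dsup_le_pathDist (p q : PathWithStart d) : dsup p.γ q.γ ≤ pathDist p q :=
  le_add_of_nonneg_right (abs_nonneg _)

lemma abs_sub_le_pathDist (p q : PathWithStart d) : |p.t0 - q.t0| ≤ pathDist p q :=
  le_add_of_nonneg_left (dsup_nonneg _ _)

lemma pathDist_nonneg (p q : PathWithStart d) : 0 ≤ pathDist p q :=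
  add_nonneg (dsup_nonneg _ _) (abs_nonneg _)

lemma pathDist_comm (p q : PathWithStart d) : pathDist p q = pathDist q p := by
  rw [pathDist, pathDist, dsup_comm, abs_sub_comm]

lemma pathDist_eq_zero_iff {p q : PathWithStart d} : pathDist p q = 0 ↔ p = q := by
  refine ⟨fun h => ?_, fun h => by rw [h, pathDist, dsup_self, sub_self, abs_zero, add_zero]⟩
  obtain ⟨hγ, ht⟩ := (add_eq_zero_iff_of_nonneg (dsup_nonneg _ _) (abs_nonneg _)).1 h
  exact ext (sub_eq_zero.1 (abs_eq_zero.1 ht)) (eq_of_dsup_eq_zero hγ)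

lemma pathDist_triangle (p q r : PathWithStart d) :
    pathDist p r ≤ pathDist p q + pathDist q r := by
  have := dsup_triangle p.γ q.γ r.γ
  have := abs_sub_le p.t0 q.t0 r.t0
  rw [pathDist, pathDist, pathDist]
  linarith

lemma const_before_of_tendstoLocallyUniformly {ι : Type*} {l : Filter ι} [l.NeBot]
    {u : ι → PathWithStart d} {T : ℝ} {g : ℝ → EuclideanSpace ℝ (Fin d)}
    (hT : Tendsto (fun n => (u n).t0) l (𝓝 T))
    (hg : TendstoLocallyUniformly (fun n => (u n).γ) g l) (hgc : Continuous g) :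
    ∀ t ≤ T, g t = g T := by
  intro t ht
  have hstart : Tendsto (fun n => (u n).γ (u n).t0) l (𝓝 (g T)) :=
    hg.tendsto_comp hgc.continuousAt hT
  have hmin : Tendsto (fun n => (u n).γ (min t (u n).t0)) l (𝓝 (g t)) := by
    simpa [min_eq_left ht] using hg.tendsto_comp hgc.continuousAt ((tendsto_const_nhds (x := t)).min hT)
  have hsame : (fun n => (u n).γ (min t (u n).t0)) = fun n => (u n).γ (u n).t0 :=
    funext fun n => (u n).const_before _ (min_le_right _ _)
  exact tendsto_nhds_unique (hsame ▸ hmin) hstart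

theorem exists_tendsto_pathDist_of_cauchy (u : ℕ → PathWithStart d)
    (hu : ∀ ε : ℝ, 0 < ε → ∃ N : ℕ, ∀ m ≥ N, ∀ n ≥ N, pathDist (u m) (u n) < ε) :
    ∃ p : PathWithStart d, Tendsto (fun n => pathDist (u n) p) atTop (𝓝 0) := by
  obtain ⟨T, hT⟩ := cauchySeq_tendsto_of_complete <|
    Metric.cauchySeq_iff (u := fun n => (u n).t0).2 fun ε hε => (hu ε hε).imp fun _ hN m hm n hn =>
      (Real.dist_eq _ _).trans_lt ((abs_sub_le_pathDist _ _).trans_lt (hN m hm n hn))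
  obtain ⟨g, hg⟩ := exists_tendstoLocallyUniformly_of_dsup_cauchy fun ε hε =>
    (hu ε hε).imp fun _ hN m hm n hn => (dsup_le_pathDist _ _).trans_lt (hN m hm n hn)
  have hgc : Continuous g := hg.continuous (Frequently.of_forall fun n => (u n).cont)
  refine ⟨⟨T, g, hgc, const_before_of_tendstoLocallyUniformly hT hg hgc⟩, ?_⟩
  simpa [pathDist] using (tendsto_dsup_of_tendstoLocallyUniformly hg).add (hT.sub_const T).abs

end PathWithStart

open PathWithStart

/-- `ϱ` is a metric on the space of paths with starting times, and the
resulting metric space is complete. -/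
theorem stmt15 (d : ℕ) :
    (∀ p q : PathWithStart d, 0 ≤ pathDist p q) ∧
    (∀ p q : PathWithStart d, pathDist p q = pathDist q p) ∧
    (∀ p q : PathWithStart d, pathDist p q = 0 ↔ p = q) ∧
    (∀ p q r : PathWithStart d, pathDist p r ≤ pathDist p q + pathDist q r) ∧
    (∀ u : ℕ → PathWithStart d,
      (∀ ε : ℝ, 0 < ε → ∃ N : ℕ, ∀ m ≥ N, ∀ n ≥ N, pathDist (u m) (u n) < ε) →
      ∃ p : PathWithStart d,
        Tendsto (fun n => pathDist (u n) p) atTop (nhds 0)) :=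
  ⟨pathDist_nonneg, pathDist_comm, fun _ _ => pathDist_eq_zero_iff, pathDist_triangle,
    exists_tendsto_pathDist_of_cauchy⟩
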